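/- Let (A, 𝒢, α, β) be an object crossed system such that: every A_e is a field; 𝒢 is connected, i.e. for any two objects e, f there exists a morphism σ with d(σ) = e and r(σ) = f; and distinct parallel morphisms act differently, i.e. whenever σ ≠ τ are morphisms with d(σ) = d(τ) and r(σ) = r(τ), the ring isomorphisms α_σ and α_τ are distinct. Then the ring A ⋊^α_β 𝒢 is simple: its only two-sided ideals are {0} and A ⋊^α_β 𝒢 itself. -/
import Mathlib


open CategoryTheory

universe u v

/-- The type of all morphisms of a groupoid `𝒢`, bundled with their source and target. -/
abbrev Mor (𝒢 : Type u) [Groupoid 𝒢] : Type _ := Σ (e f : 𝒢), e ⟶ f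

/-- A grading of a (not necessarily unital) ring `R` by a groupoid `𝒢`:
`R` is the internal direct sum of additive subgroups `grade σ`, one for each
morphism `σ`, with `R_σ R_τ ⊆ R_{στ}` for composable pairs (note that the paper's
product `στ`, requiring `d(σ) = r(τ)`, is `τ ≫ σ` in categorical notation), and
`R_σ R_τ = 0` for non-composable pairs. -/
structure GroupoidGrading (𝒢 : Type u) [Groupoid 𝒢] (R : Type v) [NonUnitalRing R] where
  grade : ∀ ⦃e f : 𝒢⦄, (e ⟶ f) → AddSubgroup R
  decompose : ∀ r : R, ∃ (s : Finset (Mor 𝒢)) (c : Mor 𝒢 → R),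
    (∀ σ : Mor 𝒢, c σ ∈ grade σ.2.2) ∧ r = ∑ σ ∈ s, c σ
  indep : ∀ (s : Finset (Mor 𝒢)) (c : Mor 𝒢 → R),
    (∀ σ : Mor 𝒢, c σ ∈ grade σ.2.2) → (∑ σ ∈ s, c σ) = 0 → ∀ σ ∈ s, c σ = 0
  mul_mem : ∀ ⦃a b c : 𝒢⦄ (σ : b ⟶ c) (τ : a ⟶ b),
    ∀ x ∈ grade σ, ∀ y ∈ grade τ, x * y ∈ grade (τ ≫ σ)
  mul_eq_zero : ∀ ⦃a b b' c : 𝒢⦄ (σ : b ⟶ c) (τ : a ⟶ b'), b' ≠ b →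
    ∀ x ∈ grade σ, ∀ y ∈ grade τ, x * y = 0

/-- Object unitality data for a groupoid graded ring: a family of local identities
`one e ∈ R_e` such that `1_{R_{r(σ)}} x = x 1_{R_{d(σ)}} = x` for every homogeneous
`x ∈ R_σ` (in particular each `R_e` is a unital ring with identity `one e`). -/
structure ObjectUnital {𝒢 : Type u} [Groupoid 𝒢] {R : Type v} [NonUnitalRing R]
    (g : GroupoidGrading 𝒢 R) where
  one : 𝒢 → R
  one_mem : ∀ e : 𝒢, one e ∈ g.grade (𝟙 e)
  one_mul : ∀ ⦃e f : 𝒢⦄ (σ : e ⟶ f), ∀ x ∈ g.grade σ, one f * x = x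
  mul_one : ∀ ⦃e f : 𝒢⦄ (σ : e ⟶ f), ∀ x ∈ g.grade σ, x * one e = x
/-- An object crossed system `(A, 𝒢, α, β)`: a family of nonzero unital rings `A e`
indexed by the objects of `𝒢`, a weak action `α` assigning to each morphism
`σ : e ⟶ f` (so `d(σ) = e`, `r(σ) = f`) a ring isomorphism `α σ : A e ≃+* A f` with
`α (𝟙 e) = id`, and an `α`-cocycle `β` assigning to each composable pair (in the paper's
notation `β_{σ,τ}` for `d(σ) = r(τ)`, i.e. `τ : a ⟶ b`, `σ : b ⟶ c`) a unit of `A c`. -/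
structure ObjectCrossedSystem (𝒢 : Type u) [Groupoid 𝒢]
    (A : 𝒢 → Type v) [∀ e, Ring (A e)] where
  nontriv : ∀ e : 𝒢, (0 : A e) ≠ 1
  α : ∀ ⦃e f : 𝒢⦄, (e ⟶ f) → (A e ≃+* A f)
  α_id : ∀ e : 𝒢, α (𝟙 e) = RingEquiv.refl (A e)
  β : ∀ ⦃a b c : 𝒢⦄, (b ⟶ c) → (a ⟶ b) → (A c)ˣ
  β_id_right : ∀ ⦃b c : 𝒢⦄ (σ : b ⟶ c), β σ (𝟙 b) = 1
  β_id_left : ∀ ⦃b c : 𝒢⦄ (σ : b ⟶ c), β (𝟙 c) σ = 1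
  α_α : ∀ ⦃a b c : 𝒢⦄ (σ : b ⟶ c) (τ : a ⟶ b) (x : A a),
    α σ (α τ x) = (β σ τ : A c) * α (τ ≫ σ) x * (((β σ τ)⁻¹ : (A c)ˣ) : A c)
  cocycle : ∀ ⦃a b c d : 𝒢⦄ (σ : c ⟶ d) (τ : b ⟶ c) (ρ : a ⟶ b),
    (β σ τ : A d) * (β (τ ≫ σ) ρ : A d) = α σ (β τ ρ : A c) * (β σ (ρ ≫ τ) : A d)

/-- The underlying additive group of the crossed product `A ⋊^α_β 𝒢`: finitely supported
families `(a_σ)` indexed by the morphisms of `𝒢` with `a_σ ∈ A_{r(σ)}`; the element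
`a u_σ` is `uElt σ a` below. -/
abbrev CrossedProd (𝒢 : Type u) [Groupoid 𝒢] (A : 𝒢 → Type v) [∀ e, AddCommGroup (A e)] :=
  Π₀ σ : Mor 𝒢, A σ.2.1

open Classical in
/-- The element `a u_σ` of the crossed product. -/
noncomputable def uElt {𝒢 : Type u} [Groupoid 𝒢] {A : 𝒢 → Type v} [∀ e, AddCommGroup (A e)]
    {e f : 𝒢} (σ : e ⟶ f) (a : A f) : CrossedProd 𝒢 A :=
  DFinsupp.single (⟨e, f, σ⟩ : Mor 𝒢) a

/-- The element `1_{A_e} u_e` of the crossed product. -/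
noncomputable def cpOne {𝒢 : Type u} [Groupoid 𝒢] (A : 𝒢 → Type v) [∀ e, Ring (A e)]
    (e : 𝒢) : CrossedProd 𝒢 A :=
  uElt (𝟙 e) (1 : A e)

open Classical in
/-- The product of the crossed product `A ⋊^α_β 𝒢`, determined biadditively by
`(a u_σ)(b u_τ) = a α_σ(b) β_{σ,τ} u_{στ}` for composable `(σ,τ)` (i.e. `d(σ) = r(τ)`;
 in categorical notation `στ = τ ≫ σ`) and `(a u_σ)(b u_τ) = 0` otherwise. -/
noncomputable def cpMul {𝒢 : Type u} [Groupoid 𝒢] {A : 𝒢 → Type v} [∀ e, Ring (A e)]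
    (S : ObjectCrossedSystem 𝒢 A) (x y : CrossedProd 𝒢 A) : CrossedProd 𝒢 A :=
  x.sum fun σ a => y.sum fun τ b =>
    if h : τ.2.1 = σ.1 then
      uElt ((τ.2.2 ≫ eqToHom h) ≫ σ.2.2)
        (a * S.α σ.2.2 (cast (congrArg A h) b) * (S.β σ.2.2 (τ.2.2 ≫ eqToHom h) : A σ.2.1))
    else 0

section Helpers

open Classical

variable {𝒢 : Type u} [Groupoid 𝒢] {A : 𝒢 → Type v} [∀ e, Ring (A e)]
  (S : ObjectCrossedSystem 𝒢 A)

lemma cpMul_single_left {e f : 𝒢} (σ : e ⟶ f) (a : A f) (y : CrossedProd 𝒢 A) :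
    cpMul S (uElt σ a) y = y.sum (fun τ b =>
      if h : τ.2.1 = e then
        uElt ((τ.2.2 ≫ eqToHom h) ≫ σ)
          (a * S.α σ (cast (congrArg A h) b) * (S.β σ (τ.2.2 ≫ eqToHom h) : A f))
      else 0) := by
  rw [cpMul, uElt]
  refine DFinsupp.sum_single_index ?_
  apply Finset.sum_eq_zero
  intro τ _
  dsimp only
  split
  · simp [uElt]
  · rfl

lemma cpMul_uElt_uElt {e' e f : 𝒢} (σ : e ⟶ f) (τ : e' ⟶ e) (a : A f) (b : A e) :
    cpMul S (uElt σ a) (uElt τ b) = uElt (τ ≫ σ) (a * S.α σ b * (S.β σ τ : A f)) := by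
  rw [cpMul_single_left, uElt, DFinsupp.sum_single_index]
  · rw [dif_pos rfl, show (τ ≫ eqToHom rfl) ≫ σ = τ ≫ σ by simp]
    simp [uElt]
  · rw [dif_pos rfl]
    simp [uElt]

lemma cpMul_uElt_uElt_ne {e' g e f : 𝒢} (σ : e ⟶ f) (τ : e' ⟶ g) (hne : g ≠ e)
    (a : A f) (b : A g) :
    cpMul S (uElt σ a) (uElt τ b) = 0 := by
  rw [cpMul_single_left, uElt, DFinsupp.sum_single_index]
  · exact dif_neg hne
  · exact dif_neg hne

end Helpers
section Helpers2

open Classical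

variable {𝒢 : Type u} [Groupoid 𝒢] {A : 𝒢 → Type v} [∀ e, Ring (A e)]
  (S : ObjectCrossedSystem 𝒢 A)

lemma mor_snd_eq {𝒢' : Type u} [Groupoid 𝒢'] {g f₁ f₂ : 𝒢'} {u : g ⟶ f₁} {v : g ⟶ f₂}
    (h : (⟨g, f₁, u⟩ : Mor 𝒢') = ⟨g, f₂, v⟩) : (⟨f₁, u⟩ : Σ f, g ⟶ f) = ⟨f₂, v⟩ :=
  eq_of_heq (Sigma.mk.inj_iff.mp h).2

lemma cpMul_eq_sum_left (x y : CrossedProd 𝒢 A) :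
    cpMul S x y = x.sum (fun q c => cpMul S (uElt q.2.2 c) y) := by
  rw [cpMul, DFinsupp.sum, DFinsupp.sum]
  refine Finset.sum_congr rfl ?_
  intro q _
  rw [cpMul_single_left]

lemma cpMul_apply_right (x : CrossedProd 𝒢 A) {g e : 𝒢} (μ : g ⟶ e) (b : A e)
    {f₂ : 𝒢} (ν : g ⟶ f₂) :
    cpMul S x (uElt μ b) ⟨g, f₂, ν⟩ =
      x ⟨e, f₂, inv μ ≫ ν⟩ * S.α (inv μ ≫ ν) b * (S.β (inv μ ≫ ν) μ : A f₂) := by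
  rw [cpMul_eq_sum_left, DFinsupp.sum_apply, DFinsupp.sum]
  rw [Finset.sum_eq_single (⟨e, f₂, inv μ ≫ ν⟩ : Mor 𝒢)]
  · rw [cpMul_uElt_uElt, show μ ≫ inv μ ≫ ν = ν by simp]
    simp [uElt]
  · rintro ⟨e₁, f₁, ρ⟩ _ hne
    dsimp only
    by_cases h : e₁ = e
    · subst h
      rw [cpMul_uElt_uElt, uElt, DFinsupp.single_apply, dif_neg]
      intro hEq
      apply hne
      obtain ⟨h1, h2⟩ := Sigma.mk.inj_iff.mp (mor_snd_eq hEq)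
      subst h1
      have h3 := eq_of_heq h2
      have : ρ = inv μ ≫ ν := by rw [← h3]; simp
      rw [this]
    · rw [cpMul_uElt_uElt_ne S _ _ (Ne.symm h)]
      rfl
  · intro h
    rw [DFinsupp.notMem_support_iff.mp h, cpMul_uElt_uElt]
    simp [uElt]

lemma cpMul_apply_right_ne (x : CrossedProd 𝒢 A) {g e : 𝒢} (μ : g ⟶ e) (b : A e)
    (m : Mor 𝒢) (hm : m.1 ≠ g) :
    cpMul S x (uElt μ b) m = 0 := by
  rw [cpMul_eq_sum_left, DFinsupp.sum_apply, DFinsupp.sum]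
  apply Finset.sum_eq_zero
  rintro ⟨e₁, f₁, ρ⟩ _
  dsimp only
  by_cases h : e₁ = e
  · subst h
    rw [cpMul_uElt_uElt, uElt, DFinsupp.single_apply, dif_neg]
    intro hEq
    exact hm (by rw [← hEq])
  · rw [cpMul_uElt_uElt_ne S _ _ (Ne.symm h)]
    rfl

end Helpers2
section Helpers3

open Classical

variable {𝒢 : Type u} [Groupoid 𝒢] {A : 𝒢 → Type v} [∀ e, Ring (A e)]
  (S : ObjectCrossedSystem 𝒢 A)

lemma cpMul_apply_left {e f : 𝒢} (σ : e ⟶ f) (a : A f) (x : CrossedProd 𝒢 A)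
    {e₂ : 𝒢} (ν : e₂ ⟶ f) :
    cpMul S (uElt σ a) x ⟨e₂, f, ν⟩ =
      a * S.α σ (x ⟨e₂, e, ν ≫ inv σ⟩) * (S.β σ (ν ≫ inv σ) : A f) := by
  rw [cpMul_single_left, DFinsupp.sum_apply, DFinsupp.sum]
  rw [Finset.sum_eq_single (⟨e₂, e, ν ≫ inv σ⟩ : Mor 𝒢)]
  · rw [dif_pos rfl, show ((ν ≫ inv σ) ≫ eqToHom rfl) ≫ σ = ν by simp]
    simp [uElt]
  · rintro ⟨e₁, f₁, ρ⟩ _ hne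
    dsimp only
    by_cases h : f₁ = e
    · subst h
      rw [dif_pos rfl, show (ρ ≫ eqToHom rfl) ≫ σ = ρ ≫ σ by simp,
        uElt, DFinsupp.single_apply, dif_neg]
      intro hEq
      apply hne
      have h1 : e₁ = e₂ := congrArg (fun m : Mor 𝒢 => m.1) hEq
      subst h1
      have h3 := eq_of_heq (Sigma.mk.inj_iff.mp (mor_snd_eq hEq)).2
      have : ρ = ν ≫ inv σ := by rw [← h3]; simp
      rw [this]
    · rw [dif_neg h]
      rfl
  · intro h
    rw [DFinsupp.notMem_support_iff.mp h, dif_pos rfl]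
    simp [uElt]

lemma cpMul_apply_left_ne {e f : 𝒢} (σ : e ⟶ f) (a : A f) (x : CrossedProd 𝒢 A)
    (m : Mor 𝒢) (hm : m.2.1 ≠ f) :
    cpMul S (uElt σ a) x m = 0 := by
  rw [cpMul_single_left, DFinsupp.sum_apply, DFinsupp.sum]
  apply Finset.sum_eq_zero
  rintro ⟨e₁, f₁, ρ⟩ _
  dsimp only
  by_cases h : f₁ = e
  · subst h
    rw [dif_pos rfl, show (ρ ≫ eqToHom rfl) ≫ σ = ρ ≫ σ by simp,
      uElt, DFinsupp.single_apply, dif_neg]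
    intro hEq
    exact hm (by rw [← hEq])
  · rw [dif_neg h]
    rfl

end Helpers3

/-- Let `(A, 𝒢, α, β)` be an object crossed system in which every `A_e`
is a field, `𝒢` is connected, and distinct parallel morphisms act by distinct
isomorphisms. Then the crossed product `A ⋊^α_β 𝒢` is simple: every two-sided ideal
(an additive subgroup closed under left and right multiplication by arbitrary elements)
is `{0}` or the whole ring. -/
theorem stmt7 {𝒢 : Type u} [Groupoid 𝒢] {A : 𝒢 → Type v} [∀ e, Field (A e)]
    (S : ObjectCrossedSystem 𝒢 A)
    (hconn : ∀ e f : 𝒢, Nonempty (e ⟶ f))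
    (hfaith : ∀ ⦃e f : 𝒢⦄ (σ τ : e ⟶ f), σ ≠ τ → S.α σ ≠ S.α τ) :
    ∀ J : AddSubgroup (CrossedProd 𝒢 A),
      (∀ x ∈ J, ∀ r : CrossedProd 𝒢 A, cpMul S r x ∈ J ∧ cpMul S x r ∈ J) →
      J = ⊥ ∨ J = ⊤ := by
  classical
  intro J hJ
  by_cases hbot : J = ⊥
  · exact Or.inl hbot
  right
  -- a nonzero element exists
  have hex : ∃ x ∈ J, x ≠ 0 := by
    by_contra hc
    push_neg at hc
    exact hbot ((AddSubgroup.eq_bot_iff_forall J).mpr hc)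
  -- choose one of minimal support cardinality
  obtain ⟨x0, hx0J, hx00⟩ := hex
  have hsne : {n | ∃ x ∈ J, x ≠ 0 ∧ x.support.card = n}.Nonempty :=
    ⟨x0.support.card, x0, hx0J, hx00, rfl⟩
  obtain ⟨x, hxJ, hxne, hxcard⟩ := Nat.sInf_mem hsne
  have hmin : ∀ y ∈ J, y ≠ 0 → x.support.card ≤ y.support.card := by
    intro y hyJ hy0
    rw [hxcard]
    exact Nat.sInf_le ⟨y, hyJ, hy0, rfl⟩
  -- pick a morphism in the support
  obtain ⟨p, hp⟩ := Finset.nonempty_iff_ne_empty.mpr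
    (fun h => hxne (DFinsupp.support_eq_empty.mp h))
  obtain ⟨e, f, σ₀⟩ := p
  have hpne : x ⟨e, f, σ₀⟩ ≠ 0 := DFinsupp.mem_support_iff.mp hp
  -- x1 := x * u_{σ₀⁻¹}
  set x1 : CrossedProd 𝒢 A := cpMul S x (uElt (inv σ₀) (1 : A e)) with hx1def
  have hx1J : x1 ∈ J := (hJ x hxJ _).2
  have hx1v : ∀ {f₂ : 𝒢} (ν : f ⟶ f₂), x1 ⟨f, f₂, ν⟩ =
      x ⟨e, f₂, σ₀ ≫ ν⟩ * (S.β (σ₀ ≫ ν) (inv σ₀) : A f₂) := by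
    intro f₂ ν
    rw [hx1def, cpMul_apply_right, show inv (inv σ₀) ≫ ν = σ₀ ≫ ν by simp]
    simp
  have hx1m0 : x1 ⟨f, f, 𝟙 f⟩ ≠ 0 := by
    rw [hx1v (𝟙 f), show σ₀ ≫ 𝟙 f = σ₀ by simp]
    exact mul_ne_zero hpne (Units.ne_zero _)
  have hx1ne : x1 ≠ 0 := fun h => hx1m0 (by rw [h]; rfl)
  -- card bound for x1
  have hcard1 : x1.support.card ≤ x.support.card := by
    apply Finset.card_le_card_of_injOn (fun m =>
      if h : m.1 = f then ⟨e, m.2.1, σ₀ ≫ (eqToHom h.symm ≫ m.2.2)⟩ else m)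
    · rintro ⟨g1, g2, ν⟩ hm
      have hv : x1 ⟨g1, g2, ν⟩ ≠ 0 := DFinsupp.mem_support_iff.mp hm
      have hg1 : g1 = f := by
        by_contra hne
        exact hv (cpMul_apply_right_ne S x (inv σ₀) 1 _ hne)
      subst g1
      rw [hx1v ν] at hv
      dsimp only
      rw [dif_pos rfl]
      simp only [eqToHom_refl, Category.id_comp]
      apply DFinsupp.mem_support_iff.mpr
      intro h0
      exact hv (by rw [h0, zero_mul])
    · rintro ⟨g1, g2, ν⟩ hm ⟨g1', g2', ν'⟩ hm' hEq
      have hv : x1 ⟨g1, g2, ν⟩ ≠ 0 := DFinsupp.mem_support_iff.mp hm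
      have hv' : x1 ⟨g1', g2', ν'⟩ ≠ 0 := DFinsupp.mem_support_iff.mp hm'
      have hg1 : g1 = f := by
        by_contra hne
        exact hv (cpMul_apply_right_ne S x (inv σ₀) 1 _ hne)
      have hg1' : g1' = f := by
        by_contra hne
        exact hv' (cpMul_apply_right_ne S x (inv σ₀) 1 _ hne)
      subst g1; subst g1'
      dsimp only at hEq
      rw [dif_pos rfl, dif_pos rfl] at hEq
      simp only [eqToHom_refl, Category.id_comp] at hEq
      obtain ⟨h1, h2⟩ := Sigma.mk.inj_iff.mp (mor_snd_eq hEq)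
      subst h1
      have h3 := eq_of_heq h2
      have h4 : ν = ν' := by
        have := congrArg (fun t => inv σ₀ ≫ t) h3
        simpa using this
      rw [h4]
  -- x3 := 1_f * x1 * 1_f
  set x2 : CrossedProd 𝒢 A := cpMul S (uElt (𝟙 f) (1 : A f)) x1 with hx2def
  have hx2J : x2 ∈ J := (hJ x1 hx1J _).1
  set x3 : CrossedProd 𝒢 A := cpMul S x2 (uElt (𝟙 f) (1 : A f)) with hx3def
  have hx3J : x3 ∈ J := (hJ x2 hx2J _).2
  have hx2v : ∀ {e₂ : 𝒢} (ν : e₂ ⟶ f), x2 ⟨e₂, f, ν⟩ = x1 ⟨e₂, f, ν⟩ := by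
    intro e₂ ν
    rw [hx2def, cpMul_apply_left, show ν ≫ inv (𝟙 f) = ν by simp, S.α_id, S.β_id_left]
    simp
  have hx2off : ∀ m : Mor 𝒢, m.2.1 ≠ f → x2 m = 0 := fun m hm =>
    cpMul_apply_left_ne S _ _ _ m hm
  have hx3v : ∀ {f₂ : 𝒢} (ν : f ⟶ f₂), x3 ⟨f, f₂, ν⟩ = x2 ⟨f, f₂, ν⟩ := by
    intro f₂ ν
    rw [hx3def, cpMul_apply_right, show inv (𝟙 f) ≫ ν = ν by simp, S.β_id_right]
    simp
  have hx3src : ∀ m : Mor 𝒢, m.1 ≠ f → x3 m = 0 := fun m hm =>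
    cpMul_apply_right_ne S _ _ _ m hm
  have hx3loop : ∀ ν : f ⟶ f, x3 ⟨f, f, ν⟩ = x1 ⟨f, f, ν⟩ := fun ν => by
    rw [hx3v, hx2v]
  have hx3off : ∀ m : Mor 𝒢, m.1 ≠ f ∨ m.2.1 ≠ f → x3 m = 0 := by
    rintro ⟨g1, g2, ν⟩ (h | h)
    · exact hx3src _ h
    · by_cases h1 : g1 = f
      · subst g1
        rw [hx3v ν]
        exact hx2off _ h
      · exact hx3src _ h1
  have hx3m0 : x3 ⟨f, f, 𝟙 f⟩ ≠ 0 := by rw [hx3loop]; exact hx1m0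
  have hsupp31 : x3.support ⊆ x1.support := by
    rintro ⟨g1, g2, ν⟩ hm
    have hv := DFinsupp.mem_support_iff.mp hm
    have hg1 : g1 = f := by by_contra h; exact hv (hx3off _ (Or.inl h))
    have hg2 : g2 = f := by by_contra h; exact hv (hx3off _ (Or.inr h))
    subst g1; subst g2
    rw [hx3loop] at hv
    exact DFinsupp.mem_support_iff.mpr hv
  have hcard3 : x3.support.card ≤ x.support.card :=
    le_trans (Finset.card_le_card hsupp31) hcard1
  -- commutator argument
  have hcomm : ∀ (a : A f) (ν : f ⟶ f),
      x3 ⟨f, f, ν⟩ * S.α ν a = a * x3 ⟨f, f, ν⟩ := by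
    intro a
    set z := cpMul S x3 (uElt (𝟙 f) a) - cpMul S (uElt (𝟙 f) a) x3 with hzdef
    have hzJ : z ∈ J := J.sub_mem (hJ x3 hx3J _).2 (hJ x3 hx3J _).1
    have hzloop : ∀ ν : f ⟶ f,
        z ⟨f, f, ν⟩ = x3 ⟨f, f, ν⟩ * S.α ν a - a * x3 ⟨f, f, ν⟩ := by
      intro ν
      rw [hzdef, DFinsupp.sub_apply, cpMul_apply_right, cpMul_apply_left,
        show inv (𝟙 f) ≫ ν = ν by simp, show ν ≫ inv (𝟙 f) = ν by simp,
        S.β_id_right, S.β_id_left, S.α_id]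
      simp
    have hzoff : ∀ m : Mor 𝒢, m.1 ≠ f ∨ m.2.1 ≠ f → z m = 0 := by
      rintro ⟨g1, g2, ν⟩ (h | h)
      · rw [hzdef, DFinsupp.sub_apply, cpMul_apply_right_ne S _ _ _ _ h]
        by_cases h2 : g2 = f
        · subst g2
          rw [cpMul_apply_left, hx3src ⟨g1, f, ν ≫ inv (𝟙 f)⟩ h]
          simp
        · rw [cpMul_apply_left_ne S _ _ _ _ h2]
          simp
      · rw [hzdef, DFinsupp.sub_apply, cpMul_apply_left_ne S _ _ _ _ h]
        by_cases h1 : g1 = f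
        · subst g1
          rw [cpMul_apply_right, hx3off ⟨f, g2, inv (𝟙 f) ≫ ν⟩ (Or.inr h)]
          simp
        · rw [cpMul_apply_right_ne S _ _ _ _ h1]
          simp
    have hzm0 : z ⟨f, f, 𝟙 f⟩ = 0 := by
      rw [hzloop, S.α_id]
      simp [mul_comm]
    have hzsupp : z.support ⊆ x3.support.erase ⟨f, f, 𝟙 f⟩ := by
      rintro ⟨g1, g2, ν⟩ hm
      have hv := DFinsupp.mem_support_iff.mp hm
      have hg1 : g1 = f := by by_contra h; exact hv (hzoff _ (Or.inl h))
      have hg2 : g2 = f := by by_contra h; exact hv (hzoff _ (Or.inr h))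
      subst g1; subst g2
      rw [Finset.mem_erase]
      refine ⟨fun hEq => ?_, ?_⟩
      · rw [hEq] at hv
        exact hv hzm0
      apply DFinsupp.mem_support_iff.mpr
      intro h0
      apply hv
      rw [hzloop, h0]
      simp
    have hz0 : z = 0 := by
      by_contra hzne
      have h1 := hmin z hzJ hzne
      have h2 := Finset.card_le_card hzsupp
      have h3 : (x3.support.erase ⟨f, f, 𝟙 f⟩).card < x3.support.card :=
        Finset.card_erase_lt_of_mem (DFinsupp.mem_support_iff.mpr hx3m0)
      omega
    intro ν
    have hzv := hzloop ν
    rw [hz0] at hzv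
    simp only [DFinsupp.zero_apply] at hzv
    exact sub_eq_zero.mp hzv.symm
  -- every morphism in the support of x3 is the identity at f
  have hkey : ∀ ν : f ⟶ f, x3 ⟨f, f, ν⟩ ≠ 0 → ν = 𝟙 f := by
    intro ν hν
    by_contra hne
    refine hfaith ν (𝟙 f) hne (RingEquiv.ext fun a => ?_)
    rw [S.α_id]
    have h1 := hcomm a ν
    rw [mul_comm a (x3 ⟨f, f, ν⟩)] at h1
    have h2 := mul_left_cancel₀ hν h1
    simpa using h2
  -- x3 is a single
  set c := x3 ⟨f, f, 𝟙 f⟩ with hcdef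
  have hx3eq : x3 = uElt (𝟙 f) c := by
    ext m
    obtain ⟨g1, g2, ν⟩ := m
    by_cases h1 : g1 = f
    · by_cases h2 : g2 = f
      · subst g1; subst g2
        by_cases h3 : ν = 𝟙 f
        · subst h3
          rw [uElt, DFinsupp.single_apply, dif_pos rfl]
        · have h0 : x3 ⟨f, f, ν⟩ = 0 := by
            by_contra h
            exact h3 (hkey ν h)
          rw [h0, uElt, DFinsupp.single_apply, dif_neg]
          intro hEq
          exact h3 (eq_of_heq (Sigma.mk.inj_iff.mp (mor_snd_eq hEq)).2).symm
      · rw [hx3off _ (Or.inr h2), uElt, DFinsupp.single_apply, dif_neg]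
        intro hEq
        exact h2 (congrArg (fun m : Mor 𝒢 => m.2.1) hEq).symm
    · rw [hx3off _ (Or.inl h1), uElt, DFinsupp.single_apply, dif_neg]
      intro hEq
      exact h1 (congrArg (fun m : Mor 𝒢 => m.1) hEq).symm
  -- cpOne f ∈ J
  have hcne : c ≠ 0 := hx3m0
  have hOnef : cpOne A f ∈ J := by
    have h := (hJ x3 hx3J (uElt (𝟙 f) c⁻¹)).1
    rw [hx3eq, cpMul_uElt_uElt, show (𝟙 f) ≫ (𝟙 f) = 𝟙 f by simp,
      S.α_id, S.β_id_left] at h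
    simpa [cpOne, inv_mul_cancel₀ hcne] using h
  -- cpOne g ∈ J for every g
  have hOne : ∀ g : 𝒢, cpOne A g ∈ J := by
    intro g
    obtain ⟨σ⟩ := hconn f g
    set b : A f := (S.α σ).symm (((S.β σ (inv σ) : A g))⁻¹) with hbdef
    have h1 : cpMul S (uElt (𝟙 f) (1 : A f)) (uElt (inv σ) b) ∈ J := by
      have := (hJ _ hOnef (uElt (inv σ) b)).2
      rw [cpOne] at this
      exact this
    rw [cpMul_uElt_uElt, show inv σ ≫ 𝟙 f = inv σ by simp,
      S.α_id, S.β_id_left] at h1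
    have h2 := (hJ _ h1 (uElt σ (1 : A g))).1
    rw [cpMul_uElt_uElt] at h2
    rw [show inv σ ≫ σ = 𝟙 g by simp] at h2
    have hval : (1 : A g) * S.α σ (1 * RingEquiv.refl (A f) b * (1 : (A f)ˣ)) *
        (S.β σ (inv σ) : A g) = 1 := by
      simp [hbdef, RingEquiv.apply_symm_apply, inv_mul_cancel₀ (Units.ne_zero (S.β σ (inv σ)))]
    rw [hval] at h2
    rw [cpOne]
    exact h2
  -- every single is in J
  have hsingle : ∀ (m : Mor 𝒢) (a : A m.2.1), DFinsupp.single m a ∈ J := by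
    rintro ⟨e', f', τ⟩ a
    have h := (hJ _ (hOne e') (uElt τ a)).1
    rw [cpOne, cpMul_uElt_uElt, show (𝟙 e') ≫ τ = τ by simp, S.β_id_right] at h
    simpa [uElt] using h
  -- conclude
  rw [AddSubgroup.eq_top_iff']
  intro y
  have hy : y.sum (fun m a => DFinsupp.single m a) = y := DFinsupp.sum_single
  rw [← hy, DFinsupp.sum]
  exact sum_mem fun m _ => hsingle m (y m)
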